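/- Let P : 𝔤* → 𝔤 be skew, 𝔥-invariant on 𝔥°, and satisfy the Yang–Baxter equation of the pair (𝔤, 𝔥). Then the set 𝔞_P := {x ∈ 𝔤 : x − P η ∈ 𝔥 for some η ∈ 𝔥°} is a Lie subalgebra of 𝔤 containing 𝔥 (it contains 𝔥, is a linear subspace, and is closed under the Lie bracket of 𝔤). -/
import Mathlib


/-- The annihilator `𝔥° ⊆ 𝔤*` of a Lie subalgebra `𝔥` of `𝔤`. -/
def inAnn {L : Type*} [LieRing L] [LieAlgebra ℝ L] (H : LieSubalgebra ℝ L)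
    (η : Module.Dual ℝ L) : Prop :=
  ∀ x ∈ H, η x = 0

/-- The `𝔥`-invariant elements `(𝔥°)^𝔥` of the annihilator. -/
def inAnnInv {L : Type*} [LieRing L] [LieAlgebra ℝ L] (H : LieSubalgebra ℝ L)
    (η : Module.Dual ℝ L) : Prop :=
  inAnn H η ∧ ∀ u ∈ H, ∀ v : L, η ⁅u, v⁆ = 0

/-- A linear map `P : 𝔤* → 𝔤` is skew: `ξ(Pη) = -η(Pξ)`. -/
def IsSkewMap {L : Type*} [LieRing L] [LieAlgebra ℝ L]
    (P : Module.Dual ℝ L →ₗ[ℝ] L) : Prop :=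
  ∀ η ξ : Module.Dual ℝ L, ξ (P η) = - η (P ξ)

/-- The functional `η ∘ ad u : v ↦ η([u,v])`. -/
def adDual {L : Type*} [LieRing L] [LieAlgebra ℝ L] (u : L)
    (η : Module.Dual ℝ L) : Module.Dual ℝ L :=
  η ∘ₗ LieAlgebra.ad ℝ L u

/-- `P` is `𝔥`-invariant on `𝔥°`. -/
def IsInvOnAnn {L : Type*} [LieRing L] [LieAlgebra ℝ L] (H : LieSubalgebra ℝ L)
    (P : Module.Dual ℝ L →ₗ[ℝ] L) : Prop :=
  ∀ u ∈ H, ∀ η ξ : Module.Dual ℝ L, inAnn H η → inAnn H ξ →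
    ξ (P (adDual u η)) + ξ ⁅u, P η⁆ = 0

/-- `[η, ξ]_P : v ↦ η([Pξ, v]) - ξ([Pη, v])`. -/
def bracketP {L : Type*} [LieRing L] [LieAlgebra ℝ L]
    (P : Module.Dual ℝ L →ₗ[ℝ] L) (η ξ : Module.Dual ℝ L) : Module.Dual ℝ L :=
  η ∘ₗ LieAlgebra.ad ℝ L (P ξ) - ξ ∘ₗ LieAlgebra.ad ℝ L (P η)

/-- `P` satisfies the Yang–Baxter equation of the pair `(𝔤, 𝔥)`. -/
def IsYB {L : Type*} [LieRing L] [LieAlgebra ℝ L] (H : LieSubalgebra ℝ L)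
    (P : Module.Dual ℝ L →ₗ[ℝ] L) : Prop :=
  ∀ η ξ ε : Module.Dual ℝ L, inAnn H η → inAnn H ξ → inAnn H ε →
    ε (P (bracketP P η ξ) - ⁅P η, P ξ⁆) = 0

/-- The set `𝔞_P = {x : x - Pη ∈ 𝔥 for some η ∈ 𝔥°}`. -/
def aP {L : Type*} [LieRing L] [LieAlgebra ℝ L] (H : LieSubalgebra ℝ L)
    (P : Module.Dual ℝ L →ₗ[ℝ] L) : Set L :=
  {x | ∃ η : Module.Dual ℝ L, inAnn H η ∧ x - P η ∈ H}


lemma mem_of_ann {L : Type*} [LieRing L] [LieAlgebra ℝ L] (H : LieSubalgebra ℝ L)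
    (w : L) (h : ∀ ε : Module.Dual ℝ L, inAnn H ε → ε w = 0) : w ∈ H := by
  have hw : w ∈ (Submodule.dualAnnihilator H.toSubmodule).dualCoannihilator := by
    rw [Submodule.mem_dualCoannihilator]
    intro φ hφ
    exact h φ (fun x hx => (Submodule.mem_dualAnnihilator φ).mp hφ x hx)
  rwa [Subspace.dualAnnihilator_dualCoannihilator_eq] at hw

/-- `𝔞_P` is a Lie subalgebra of `𝔤` containing `𝔥`. -/
theorem aP_is_lie_subalgebra {L : Type*} [LieRing L] [LieAlgebra ℝ L]
    [FiniteDimensional ℝ L]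
    (H : LieSubalgebra ℝ L) (P : Module.Dual ℝ L →ₗ[ℝ] L)
    (hskew : IsSkewMap P) (hinv : IsInvOnAnn H P) (hyb : IsYB H P) :
    (∀ x ∈ H, x ∈ aP H P) ∧
    (∀ x ∈ aP H P, ∀ y ∈ aP H P, x + y ∈ aP H P) ∧
    (∀ c : ℝ, ∀ x ∈ aP H P, c • x ∈ aP H P) ∧
    (∀ x ∈ aP H P, ∀ y ∈ aP H P, ⁅x, y⁆ ∈ aP H P) := by
  refine ⟨?_, ?_, ?_, ?_⟩
  · intro x hx
    exact ⟨0, fun v _ => rfl, by simpa using hx⟩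
  · rintro x ⟨η, hη, hx⟩ y ⟨ξ, hξ, hy⟩
    refine ⟨η + ξ, fun v hv => by simp [hη v hv, hξ v hv], ?_⟩
    have hrw : x + y - P (η + ξ) = (x - P η) + (y - P ξ) := by
      rw [map_add]; abel
    rw [hrw]; exact H.add_mem hx hy
  · rintro c x ⟨η, hη, hx⟩
    refine ⟨c • η, fun v hv => by simp [hη v hv], ?_⟩
    have hrw : c • x - P (c • η) = c • (x - P η) := by
      rw [map_smul, smul_sub]
    rw [hrw]; exact H.smul_mem c hx
  · rintro x ⟨η, hη, hx⟩ y ⟨ξ, hξ, hy⟩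
    set h := x - P η with hh
    set k := y - P ξ with hk
    have hxd : x = P η + h := by rw [hh]; abel
    have hyd : y = P ξ + k := by rw [hk]; abel
    have hann1 : inAnn H (adDual k η) := fun v hv => hη _ (H.lie_mem hy hv)
    have hann2 : inAnn H (adDual h ξ) := fun v hv => hξ _ (H.lie_mem hx hv)
    have hbr : inAnn H (bracketP P η ξ) := by
      intro v hv
      have h1 := hinv v hv η ξ hη hξ
      have h2 := hskew (adDual v η) ξ
      have h3 : adDual v η (P ξ) = η ⁅v, P ξ⁆ := rfl
      simp only [bracketP, LinearMap.sub_apply, LinearMap.coe_comp,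
        Function.comp_apply, LieAlgebra.ad_apply]
      rw [← lie_skew (P ξ) v, ← lie_skew (P η) v, map_neg, map_neg]
      rw [h3] at h2
      have h4 : ξ ⁅v, P η⁆ = adDual v ξ (P η) := rfl
      linarith
    refine ⟨bracketP P η ξ + adDual k η - adDual h ξ, ?_, ?_⟩
    · intro v hv
      simp [hbr v hv, hann1 v hv, hann2 v hv]
    · have T1 : ⁅P η, P ξ⁆ - P (bracketP P η ξ) ∈ H := by
        apply mem_of_ann
        intro ε hε
        have hy1 := hyb η ξ ε hη hξ hε
        simp only [map_sub] at hy1 ⊢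
        linarith
      have T2 : ⁅P η, k⁆ - P (adDual k η) ∈ H := by
        apply mem_of_ann
        intro ε hε
        have hi := hinv k hy η ε hη hε
        have hsk : ε ⁅k, P η⁆ = - ε ⁅P η, k⁆ := by
          rw [← lie_skew, map_neg]
        simp only [map_sub]
        linarith
      have T3 : ⁅h, P ξ⁆ + P (adDual h ξ) ∈ H := by
        apply mem_of_ann
        intro ε hε
        have hi := hinv h hx ξ ε hξ hε
        simp only [map_add]
        linarith
      have key : ⁅x, y⁆ - P (bracketP P η ξ + adDual k η - adDual h ξ) =
          (⁅P η, P ξ⁆ - P (bracketP P η ξ)) + (⁅P η, k⁆ - P (adDual k η)) +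
          (⁅h, P ξ⁆ + P (adDual h ξ)) + ⁅h, k⁆ := by
        rw [hxd, hyd]
        simp only [map_add, map_sub, lie_add, add_lie]
        abel
      rw [key]
      exact H.add_mem (H.add_mem (H.add_mem T1 T2) T3) (H.lie_mem hx hy)
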